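/- In CCS⁻, for every process P, whenever !P ⟹ P' (P' is reached from !P by a finite sequence of τ-transitions), it holds that !P ≈ P'. -/

import Mathlib

/-- Processes of CCS⁻ (CCS without restriction): 0, input prefix, output prefix,
    parallel composition, replication. Names are natural numbers. -/
inductive Proc : Type where
  | nil : Proc
  | inp : ℕ → Proc → Proc
  | out : ℕ → Proc → Proc
  | par : Proc → Proc → Proc
  | bang : Proc → Proc

/-- Actions: input `a`, output `ā`, or the internal action `τ`. -/
inductive Act : Type where
  | inp : ℕ → Act
  | out : ℕ → Act
  | tau : Act

/-- The labelled transition relation of CCS⁻. -/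
inductive Step : Proc → Act → Proc → Prop where
  | inp (a : ℕ) (P : Proc) : Step (.inp a P) (.inp a) P
  | out (a : ℕ) (P : Proc) : Step (.out a P) (.out a) P
  | comL {a : ℕ} {P P' Q Q' : Proc} :
      Step P (.out a) P' → Step Q (.inp a) Q' → Step (.par P Q) .tau (.par P' Q')
  | comR {a : ℕ} {P P' Q Q' : Proc} :
      Step P (.out a) P' → Step Q (.inp a) Q' → Step (.par Q P) .tau (.par Q' P')
  | parL {α : Act} {P P' : Proc} (Q : Proc) :
      Step P α P' → Step (.par P Q) α (.par P' Q)
  | parR {α : Act} {P P' : Proc} (Q : Proc) :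
      Step P α P' → Step (.par Q P) α (.par Q P')
  | bang {α : Act} {P P' : Proc} :
      Step P α P' → Step (.bang P) α (.par P' (.bang P))
  | bangCom {a : ℕ} {P P' P'' : Proc} :
      Step P (.inp a) P' → Step P (.out a) P'' →
      Step (.bang P) .tau (.par P' (.par P'' (.bang P)))

/-- A single τ-transition. -/
def TauStep (P Q : Proc) : Prop := Step P .tau Q

/-- `P ⟹ Q`: reflexive–transitive closure of τ-transitions. -/
def Taus : Proc → Proc → Prop := Relation.ReflTransGen TauStep

/-- `P ⟹α Q`: `P ⟹ ⟶α ⟹ Q`. -/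
def WeakStep (P : Proc) (α : Act) (Q : Proc) : Prop :=
  ∃ P₁ P₂, Taus P P₁ ∧ Step P₁ α P₂ ∧ Taus P₂ Q

/-- `P ⟹α̂ Q`: `P ⟹ Q` if `α = τ`, and `P ⟹α Q` otherwise. -/
def WeakHat (P : Proc) (α : Act) (Q : Proc) : Prop :=
  match α with
  | .tau => Taus P Q
  | _ => WeakStep P α Q

/-- `P ⟶τ^k Q`: exactly `k` consecutive τ-transitions. -/
def TauN : Proc → ℕ → Proc → Prop
  | P, 0, Q => P = Q
  | P, n + 1, Q => ∃ P₁, TauStep P P₁ ∧ TauN P₁ n Q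

/-- `P` is divergent: there is an infinite sequence of τ-transitions from `P`. -/
def Divergent (P : Proc) : Prop :=
  ∃ f : ℕ → Proc, f 0 = P ∧ ∀ n, TauStep (f n) (f (n + 1))

/-- A relation is divergence-sensitive if related processes diverge together. -/
def DivSensitive (R : Proc → Proc → Prop) : Prop :=
  ∀ P Q, R P Q → (Divergent P ↔ Divergent Q)

/-- Weak bisimulation (symmetric, divergence-sensitive). -/
def IsWeakBisim (R : Proc → Proc → Prop) : Prop :=
  Symmetric R ∧ DivSensitive R ∧
    ∀ P Q, R P Q → ∀ α P', Step P α P' → ∃ Q', WeakHat Q α Q' ∧ R P' Q'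

/-- `P ≈ Q`: weak bisimilarity. -/
def WBisim (P Q : Proc) : Prop := ∃ R, IsWeakBisim R ∧ R P Q

/-- Strong bisimulation (symmetric, divergence-sensitive). -/
def IsStrongBisim (R : Proc → Proc → Prop) : Prop :=
  Symmetric R ∧ DivSensitive R ∧
    ∀ P Q, R P Q → ∀ α P', Step P α P' → ∃ Q', Step Q α Q' ∧ R P' Q'

/-- `P ~ Q`: strong bisimilarity. -/
def SBisim (P Q : Proc) : Prop := ∃ R, IsStrongBisim R ∧ R P Q

/-- Structural congruence: the smallest congruence with `P|0 ≡ P`,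
    `P|(Q|R) ≡ (P|Q)|R`, `P|Q ≡ Q|P`. -/
inductive SC : Proc → Proc → Prop where
  | refl (P : Proc) : SC P P
  | symm {P Q : Proc} : SC P Q → SC Q P
  | trans {P Q R : Proc} : SC P Q → SC Q R → SC P R
  | inp (a : ℕ) {P Q : Proc} : SC P Q → SC (.inp a P) (.inp a Q)
  | out (a : ℕ) {P Q : Proc} : SC P Q → SC (.out a P) (.out a Q)
  | par {P P' Q Q' : Proc} : SC P P' → SC Q Q' → SC (.par P Q) (.par P' Q')
  | bang {P Q : Proc} : SC P Q → SC (.bang P) (.bang Q)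
  | parNil (P : Proc) : SC (.par P .nil) P
  | parAssoc (P Q R : Proc) : SC (.par P (.par Q R)) (.par (.par P Q) R)
  | parComm (P Q : Proc) : SC (.par P Q) (.par Q P)

/-- Contexts: process terms with a single hole. -/
inductive Ctx : Type where
  | hole : Ctx
  | inp : ℕ → Ctx → Ctx
  | out : ℕ → Ctx → Ctx
  | parL : Ctx → Proc → Ctx
  | parR : Proc → Ctx → Ctx
  | bang : Ctx → Ctx

/-- `C.fill P`: the process `C[P]`. -/
def Ctx.fill : Ctx → Proc → Proc
  | .hole, P => P
  | .inp a C, P => .inp a (C.fill P)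
  | .out a C, P => .out a (C.fill P)
  | .parL C Q, P => .par (C.fill P) Q
  | .parR Q C, P => .par Q (C.fill P)
  | .bang C, P => .bang (C.fill P)

/-- Weak bisimulation up-to context. -/
def IsWeakBisimUptoCtx (R : Proc → Proc → Prop) : Prop :=
  Symmetric R ∧ DivSensitive R ∧
    ∀ P Q, R P Q → ∀ α P', Step P α P' →
      ∃ Q', WeakHat Q α Q' ∧
        ∃ (C : Ctx) (P₁ Q₁ : Proc), SC P' (C.fill P₁) ∧ SC Q' (C.fill Q₁) ∧ R P₁ Q₁

/-- Quasi-strong bisimulation: visible actions are matched by `⟹ ⟶α`,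
    τ-actions are matched by a single τ. -/
def IsQSBisim (R : Proc → Proc → Prop) : Prop :=
  Symmetric R ∧ DivSensitive R ∧
    ∀ P Q, R P Q →
      (∀ α P', Step P α P' → α ≠ .tau →
          ∃ Q₁ Q', Taus Q Q₁ ∧ Step Q₁ α Q' ∧ R P' Q') ∧
      (∀ P', Step P .tau P' → ∃ Q', Step Q .tau Q' ∧ R P' Q')

/-- `P ≃qs Q`: quasi-strong bisimilarity. -/
def QSBisim (P Q : Proc) : Prop := ∃ R, IsQSBisim R ∧ R P Q

/-- Quasi-strong branching bisimulation. -/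
def IsQSBBisim (R : Proc → Proc → Prop) : Prop :=
  Symmetric R ∧ DivSensitive R ∧
    ∀ P Q, R P Q →
      (∀ α P', Step P α P' → α ≠ .tau →
          ∃ Q'' Q', Taus Q Q'' ∧ Step Q'' α Q' ∧ R P Q'' ∧ R P' Q') ∧
      (∀ P', Step P .tau P' → ∃ Q', Step Q .tau Q' ∧ R P' Q')

/-- `P ≃qsb Q`: quasi-strong branching bisimilarity. -/
def QSBBisim (P Q : Proc) : Prop := ∃ R, IsQSBBisim R ∧ R P Q

/-- Branching bisimulation (divergence-sensitive). -/
def IsBrBisim (R : Proc → Proc → Prop) : Prop :=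
  Symmetric R ∧ DivSensitive R ∧
    ∀ P Q, R P Q → ∀ α P', Step P α P' →
      (α = .tau ∧ R P' Q) ∨
      ∃ Q'' Q', Taus Q Q'' ∧ Step Q'' α Q' ∧ R P Q'' ∧ R P' Q'

/-- `P ≃b Q`: branching bisimilarity. -/
def BrBisim (P Q : Proc) : Prop := ∃ R, IsBrBisim R ∧ R P Q

/-- τ-sequences all of whose steps are state-preserving. -/
def PresTaus : Proc → Proc → Prop :=
  Relation.ReflTransGen (fun P Q => TauStep P Q ∧ WBisim P Q)

/-- `Stab P k`: `P` reaches in exactly `k` τ-steps a process all of whose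
    τ-derivatives are weakly bisimilar to it. -/
def Stab (P : Proc) (k : ℕ) : Prop :=
  ∃ P', TauN P k P' ∧ ∀ P'', Taus P' P'' → WBisim P' P''

/-! Every τ-derivative of `!P` is structurally congruent to `N | !P` for some residue `N`, and
any process `X` having `!P` as a parallel component can regenerate that residue itself:
`X ⟹ ≡ N | X`. So `X` and `N | X` are weakly bisimilar: a move of `X` is copied by `N | X`,
and a move of `N | X` is matched by `X` after first producing `N`. Divergence is preserved
for the same reason. -/

def StepSimSC (X Y : Proc) : Prop :=
  ∀ α X', Step X α X' → ∃ Y', Step Y α Y' ∧ SC X' Y'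

namespace StepSimSC

theorem trans {X Y Z : Proc} (hXY : StepSimSC X Y) (hYZ : StepSimSC Y Z) : StepSimSC X Z := by
  intro α X' s
  obtain ⟨Y', sY, hXY'⟩ := hXY α X' s
  obtain ⟨Z', sZ, hYZ'⟩ := hYZ α Y' sY
  exact ⟨Z', sZ, hXY'.trans hYZ'⟩

theorem inp (a : ℕ) {P Q : Proc} (h : SC P Q) : StepSimSC (.inp a P) (.inp a Q) := by
  rintro α X' ⟨⟩
  exact ⟨_, .inp a Q, h⟩

theorem out (a : ℕ) {P Q : Proc} (h : SC P Q) : StepSimSC (.out a P) (.out a Q) := by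
  rintro α X' ⟨⟩
  exact ⟨_, .out a Q, h⟩

theorem par {P P' Q Q' : Proc} (hP : SC P P') (hQ : SC Q Q')
    (simP : StepSimSC P P') (simQ : StepSimSC Q Q') : StepSimSC (.par P Q) (.par P' Q') := by
  intro α X' s
  cases s with
  | comL s₁ s₂ =>
      obtain ⟨A, sA, hA⟩ := simP _ _ s₁
      obtain ⟨B, sB, hB⟩ := simQ _ _ s₂
      exact ⟨_, .comL sA sB, .par hA hB⟩
  | comR s₁ s₂ =>
      obtain ⟨A, sA, hA⟩ := simQ _ _ s₁
      obtain ⟨B, sB, hB⟩ := simP _ _ s₂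
      exact ⟨_, .comR sA sB, .par hB hA⟩
  | parL _ s₁ =>
      obtain ⟨A, sA, hA⟩ := simP _ _ s₁
      exact ⟨_, .parL _ sA, .par hA hQ⟩
  | parR _ s₁ =>
      obtain ⟨A, sA, hA⟩ := simQ _ _ s₁
      exact ⟨_, .parR _ sA, .par hP hA⟩

theorem bang {P Q : Proc} (h : SC P Q) (sim : StepSimSC P Q) :
    StepSimSC (.bang P) (.bang Q) := by
  intro α X' s
  cases s with
  | bang s₁ =>
      obtain ⟨A, sA, hA⟩ := sim _ _ s₁
      exact ⟨_, .bang sA, .par hA (.bang h)⟩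
  | bangCom s₁ s₂ =>
      obtain ⟨A, sA, hA⟩ := sim _ _ s₁
      obtain ⟨B, sB, hB⟩ := sim _ _ s₂
      exact ⟨_, .bangCom sA sB, .par hA (.par hB (.bang h))⟩

theorem par_nil (P : Proc) : StepSimSC (.par P .nil) P := by
  intro α X' s
  cases s with
  | comL _ s₂ => cases s₂
  | comR s₁ _ => cases s₁
  | parL _ s₁ => exact ⟨_, s₁, .parNil _⟩
  | parR _ s₁ => cases s₁

theorem par_nil_symm (P : Proc) : StepSimSC P (.par P .nil) :=
  fun _ _ s => ⟨_, .parL _ s, .symm (.parNil _)⟩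

theorem par_comm (P Q : Proc) : StepSimSC (.par P Q) (.par Q P) := by
  intro α X' s
  cases s with
  | parL _ s₁ => exact ⟨_, .parR _ s₁, .parComm _ _⟩
  | parR _ s₁ => exact ⟨_, .parL _ s₁, .parComm _ _⟩
  | comL s₁ s₂ => exact ⟨_, .comR s₁ s₂, .parComm _ _⟩
  | comR s₁ s₂ => exact ⟨_, .comL s₁ s₂, .parComm _ _⟩

theorem par_assoc (P Q R : Proc) : StepSimSC (.par P (.par Q R)) (.par (.par P Q) R) := by
  intro α X' s
  cases s with
  | parL _ s₁ => exact ⟨_, .parL _ (.parL _ s₁), .parAssoc _ _ _⟩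
  | parR _ s₁ =>
      cases s₁ with
      | parL _ s₂ => exact ⟨_, .parL _ (.parR _ s₂), .parAssoc _ _ _⟩
      | parR _ s₂ => exact ⟨_, .parR _ s₂, .parAssoc _ _ _⟩
      | comL s₂ s₃ => exact ⟨_, .comL (.parR _ s₂) s₃, .parAssoc _ _ _⟩
      | comR s₂ s₃ => exact ⟨_, .comR s₂ (.parR _ s₃), .parAssoc _ _ _⟩
  | comL s₁ s₂ =>
      cases s₂ with
      | parL _ s₃ => exact ⟨_, .parL _ (.comL s₁ s₃), .parAssoc _ _ _⟩
      | parR _ s₃ => exact ⟨_, .comL (.parL _ s₁) s₃, .parAssoc _ _ _⟩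
  | comR s₁ s₂ =>
      cases s₁ with
      | parL _ s₃ => exact ⟨_, .parL _ (.comR s₃ s₂), .parAssoc _ _ _⟩
      | parR _ s₃ => exact ⟨_, .comR s₃ (.parL _ s₂), .parAssoc _ _ _⟩

theorem par_assoc_symm (P Q R : Proc) :
    StepSimSC (.par (.par P Q) R) (.par P (.par Q R)) := by
  intro α X' s
  cases s with
  | parL _ s₁ =>
      cases s₁ with
      | parL _ s₂ => exact ⟨_, .parL _ s₂, .symm (.parAssoc _ _ _)⟩
      | parR _ s₂ => exact ⟨_, .parR _ (.parL _ s₂), .symm (.parAssoc _ _ _)⟩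
      | comL s₂ s₃ => exact ⟨_, .comL s₂ (.parL _ s₃), .symm (.parAssoc _ _ _)⟩
      | comR s₂ s₃ => exact ⟨_, .comR (.parL _ s₂) s₃, .symm (.parAssoc _ _ _)⟩
  | parR _ s₁ => exact ⟨_, .parR _ (.parR _ s₁), .symm (.parAssoc _ _ _)⟩
  | comL s₁ s₂ =>
      cases s₁ with
      | parL _ s₃ => exact ⟨_, .comL s₃ (.parR _ s₂), .symm (.parAssoc _ _ _)⟩
      | parR _ s₃ => exact ⟨_, .parR _ (.comL s₃ s₂), .symm (.parAssoc _ _ _)⟩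
  | comR s₁ s₂ =>
      cases s₂ with
      | parL _ s₃ => exact ⟨_, .comR (.parR _ s₁) s₃, .symm (.parAssoc _ _ _)⟩
      | parR _ s₃ => exact ⟨_, .parR _ (.comR s₁ s₃), .symm (.parAssoc _ _ _)⟩

end StepSimSC

namespace SC

theorem stepSimSC {X Y : Proc} (h : SC X Y) : StepSimSC X Y ∧ StepSimSC Y X := by
  induction h with
  | refl P => exact ⟨fun _ X' s => ⟨X', s, .refl _⟩, fun _ X' s => ⟨X', s, .refl _⟩⟩
  | symm _ ih => exact ih.symm
  | trans _ _ ih₁ ih₂ => exact ⟨ih₁.1.trans ih₂.1, ih₂.2.trans ih₁.2⟩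
  | inp a h => exact ⟨.inp a h, .inp a h.symm⟩
  | out a h => exact ⟨.out a h, .out a h.symm⟩
  | par hP hQ ihP ihQ => exact ⟨.par hP hQ ihP.1 ihQ.1, .par hP.symm hQ.symm ihP.2 ihQ.2⟩
  | bang h ih => exact ⟨.bang h ih.1, .bang h.symm ih.2⟩
  | parNil P => exact ⟨.par_nil P, .par_nil_symm P⟩
  | parAssoc P Q R => exact ⟨.par_assoc P Q R, .par_assoc_symm P Q R⟩
  | parComm P Q => exact ⟨.par_comm P Q, .par_comm Q P⟩

theorem exists_step {X Y X' : Proc} {α : Act} (h : SC X Y) (s : Step X α X') :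
    ∃ Y', Step Y α Y' ∧ SC X' Y' :=
  h.stepSimSC.1 α X' s

theorem exists_taus {X Y X' : Proc} (h : SC X Y) (t : Taus X X') :
    ∃ Y', Taus Y Y' ∧ SC X' Y' := by
  induction t with
  | refl => exact ⟨Y, .refl, h⟩
  | tail _ s ih =>
      obtain ⟨Z, tZ, hZ⟩ := ih
      obtain ⟨W, sW, hW⟩ := hZ.exists_step s
      exact ⟨W, tZ.tail sW, hW⟩

theorem par_left_comm (P Q R : Proc) : SC (.par P (.par Q R)) (.par Q (.par P R)) :=
  (parAssoc P Q R).trans ((par (parComm P Q) (refl R)).trans (parAssoc Q P R).symm)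

theorem par_right_comm (P Q R : Proc) : SC (.par (.par P Q) R) (.par (.par P R) Q) :=
  (parAssoc P Q R).symm.trans ((par (refl P) (parComm Q R)).trans (parAssoc P R Q))

end SC

theorem Taus.parR (M : Proc) {X X' : Proc} (t : Taus X X') : Taus (.par M X) (.par M X') :=
  t.lift (Proc.par M) fun _ _ s => Step.parR M s

theorem weakHat_of_taus_step {Q Q₁ Q₂ : Proc} {α : Act} (t : Taus Q Q₁) (s : Step Q₁ α Q₂) :
    WeakHat Q α Q₂ := by
  cases α with
  | tau => exact t.tail s
  | inp a => exact ⟨Q₁, Q₂, t, s, .refl⟩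
  | out a => exact ⟨Q₁, Q₂, t, s, .refl⟩

namespace Divergent

theorem of_forall_exists_tauStep {S : Proc → Prop} (hS : ∀ X, S X → ∃ X', TauStep X X' ∧ S X')
    {X : Proc} (hX : S X) : Divergent X := by
  choose! next hnext using hS
  have hiter : ∀ n, S (next^[n] X) := by
    intro n
    induction n with
    | zero => exact hX
    | succ n ih => rw [Function.iterate_succ_apply']; exact (hnext _ ih).2
  refine ⟨fun n => next^[n] X, rfl, fun n => ?_⟩
  simpa only [Function.iterate_succ_apply'] using (hnext _ (hiter n)).1

theorem exists_tauStep {X : Proc} (d : Divergent X) : ∃ X', TauStep X X' ∧ Divergent X' := by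
  obtain ⟨f, rfl, hf⟩ := d
  exact ⟨f 1, hf 0, fun n => f (n + 1), rfl, fun n => hf (n + 1)⟩

theorem of_tauSim {R : Proc → Proc → Prop}
    (sim : ∀ X Y, R X Y → ∀ X', TauStep X X' → ∃ Y', TauStep Y Y' ∧ R X' Y')
    {X Y : Proc} (r : R X Y) (d : Divergent X) : Divergent Y := by
  refine of_forall_exists_tauStep (S := fun Y => ∃ X, R X Y ∧ Divergent X) ?_ ⟨X, r, d⟩
  rintro Y ⟨X, r, d⟩
  obtain ⟨X', s, d'⟩ := d.exists_tauStep
  obtain ⟨Y', s', r'⟩ := sim X Y r X' s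
  exact ⟨Y', s', X', r', d'⟩

theorem of_sc {X Y : Proc} (h : SC X Y) : Divergent X → Divergent Y :=
  of_tauSim (fun _ _ h _ s => h.exists_step s) h

theorem parR (N : Proc) {X : Proc} : Divergent X → Divergent (.par N X) :=
  of_tauSim (R := fun X Y => Y = .par N X) (by rintro X _ rfl X' s; exact ⟨_, .parR N s, rfl⟩) rfl

theorem of_taus {X Y : Proc} (t : Taus X Y) (d : Divergent Y) : Divergent X := by
  refine of_forall_exists_tauStep (S := fun Z => Taus Z Y ∨ Divergent Z) ?_ (.inl t)
  rintro Z (tZ | dZ)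
  · rcases tZ.cases_head with rfl | ⟨Z', s, t'⟩
    · exact (d.exists_tauStep).imp fun _ h => ⟨h.1, .inr h.2⟩
    · exact ⟨Z', s, .inl t'⟩
  · exact dZ.exists_tauStep.imp fun _ h => ⟨h.1, .inr h.2⟩

end Divergent

inductive HasBang (p : Proc) : Proc → Prop
  | base : HasBang p (.bang p)
  | left {A : Proc} (B : Proc) : HasBang p A → HasBang p (.par A B)
  | right (A : Proc) {B : Proc} : HasBang p B → HasBang p (.par A B)

namespace HasBang

theorem step {p X X' : Proc} {α : Act} (s : Step X α X') (h : HasBang p X) : HasBang p X' := by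
  induction s with
  | inp | out => cases h
  | comL _ _ ih₁ ih₂ | comR _ _ ih₂ ih₁ =>
      cases h with
      | left _ h => exact .left _ (ih₁ h)
      | right _ h => exact .right _ (ih₂ h)
  | parL _ _ ih =>
      cases h with
      | left _ h => exact .left _ (ih h)
      | right _ h => exact .right _ h
  | parR _ _ ih =>
      cases h with
      | left _ h => exact .left _ h
      | right _ h => exact .right _ (ih h)
  | bang => cases h; exact .right _ .base
  | bangCom => cases h; exact .right _ (.right _ .base)

theorem taus {p X X' : Proc} (t : Taus X X') (h : HasBang p X) : HasBang p X' := by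
  induction t with
  | refl => exact h
  | tail _ s ih => exact ih.step s

theorem exists_sc_par {p X : Proc} (h : HasBang p X) : ∃ M, SC X (.par M (.bang p)) := by
  induction h with
  | base => exact ⟨.nil, ((SC.parComm _ _).trans (SC.parNil _)).symm⟩
  | left B _ ih =>
      obtain ⟨M, hM⟩ := ih
      exact ⟨.par M B, (SC.par hM (SC.refl B)).trans (SC.par_right_comm M _ B)⟩
  | right A _ ih =>
      obtain ⟨M, hM⟩ := ih
      exact ⟨.par A M, (SC.par (SC.refl A) hM).trans (SC.parAssoc A M _)⟩

end HasBang

def BangResidue (p N : Proc) : Prop :=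
  ∃ Z, Taus (.bang p) Z ∧ SC Z (.par N (.bang p))

def AddsResidue (p X Y : Proc) : Prop :=
  ∃ N, HasBang p X ∧ BangResidue p N ∧ SC Y (.par N X)

theorem addsResidue_bang_of_taus {p P' : Proc} (h : Taus (.bang p) P') : AddsResidue p (.bang p) P' := by
  obtain ⟨N, hN⟩ := (HasBang.base.taus h).exists_sc_par
  exact ⟨N, .base, ⟨P', h, hN⟩, hN⟩

namespace AddsResidue

variable {p X Y : Proc}

theorem exists_taus_sc (h : AddsResidue p X Y) : ∃ X₁, Taus X X₁ ∧ SC X₁ Y := by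
  obtain ⟨N, hB, ⟨Z, tZ, hZ⟩, hY⟩ := h
  obtain ⟨M, hM⟩ := hB.exists_sc_par
  obtain ⟨X₁, t, hX₁⟩ := hM.symm.exists_taus (tZ.parR M)
  refine ⟨X₁, t, hX₁.symm.trans ?_⟩
  exact (SC.par (.refl M) hZ).trans <| (SC.par_left_comm M N _).trans <|
    (SC.par (.refl N) hM.symm).trans hY.symm

theorem exists_step (h : AddsResidue p X Y) {α : Act} {X' : Proc} (s : Step X α X') :
    ∃ Y', Step Y α Y' ∧ AddsResidue p X' Y' := by
  obtain ⟨N, hB, hN, hY⟩ := h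
  obtain ⟨Y', sY, hY'⟩ := hY.symm.exists_step (s.parR N)
  exact ⟨Y', sY, N, hB.step s, hN, hY'.symm⟩

theorem exists_weakHat_of_step_right (h : AddsResidue p X Y) {α : Act} {Y' : Proc}
    (s : Step Y α Y') : ∃ X', WeakHat X α X' ∧ SC Y' X' := by
  obtain ⟨X₁, t, hX₁⟩ := h.exists_taus_sc
  obtain ⟨X', s', hX'⟩ := hX₁.symm.exists_step s
  exact ⟨X', weakHat_of_taus_step t s', hX'⟩

theorem divergent_iff (h : AddsResidue p X Y) : Divergent X ↔ Divergent Y := by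
  obtain ⟨X₁, t, hX₁⟩ := h.exists_taus_sc
  obtain ⟨N, -, -, hY⟩ := h
  exact ⟨fun d => .of_sc hY.symm (d.parR N), fun d => .of_taus t (.of_sc hX₁.symm d)⟩

end AddsResidue

def BangRel (p X Y : Proc) : Prop :=
  SC X Y ∨ AddsResidue p X Y ∨ AddsResidue p Y X

theorem isWeakBisim_bangRel (p : Proc) : IsWeakBisim (BangRel p) := by
  refine ⟨?symm, ?div, ?transfer⟩
  case symm =>
    rintro X Y (h | h | h)
    exacts [.inl h.symm, .inr (.inr h), .inr (.inl h)]
  case div =>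
    rintro X Y (h | h | h)
    exacts [⟨.of_sc h, .of_sc h.symm⟩, h.divergent_iff, h.divergent_iff.symm]
  case transfer =>
    rintro X Y (h | h | h) α X' s
    · obtain ⟨Y', s', h'⟩ := h.exists_step s
      exact ⟨Y', weakHat_of_taus_step .refl s', .inl h'⟩
    · obtain ⟨Y', s', h'⟩ := h.exists_step s
      exact ⟨Y', weakHat_of_taus_step .refl s', .inr (.inl h')⟩
    · obtain ⟨Y', w, h'⟩ := h.exists_weakHat_of_step_right s
      exact ⟨Y', w, .inl h'⟩

/-- whenever `!P ⟹ P'`, it holds that `!P ≈ P'`. -/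
theorem bang_taus_wbisim (P P' : Proc) (h : Taus (.bang P) P') :
    WBisim (.bang P) P' :=
  ⟨BangRel P, isWeakBisim_bangRel P, .inr (.inl (addsResidue_bang_of_taus h))⟩
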